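/- arXiv:2211.11648 — 2 statements merged into one kernel-verified Lean document; each statement's English description precedes it below -/
import Mathlib

section
/- For non-negative integers k, j with j ≤ k and non-negative integer r, the identity Σ_{i=0}^{k-j} (-1)^i · C(k,i) · S(k-i, j) · r^i = (1/j!) · Σ_{i=0}^{j} (-1)^{j-i} · C(j,i) · (i-r)^k holds (as integers or rationals). -/
open Finset

/-- Stirling numbers of the second kind. -/
def st : ℕ → ℕ → ℕ
  | 0, 0 => 1
  | 0, _ + 1 => 0
  | _ + 1, 0 => 0
  | k + 1, j + 1 => (j + 1) * st k (j + 1) + st k j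

/-- Power sum `S_k(n) = 1^k + 2^k + ⋯ + n^k` as a rational. -/
def S (k n : ℕ) : ℚ := ∑ i ∈ range n, ((i : ℚ) + 1) ^ k

/-- The `r`-Stirling number of the second kind `{k, j}_r` (rational form). -/
def rSt (k j : ℕ) (r : ℚ) : ℚ :=
  (1 / (j.factorial : ℚ)) * ∑ i ∈ range (j + 1),
    (-1 : ℚ) ^ (j - i) * (j.choose i : ℚ) * ((i : ℚ) + r) ^ k

/-- The dual (non-central) Stirling number `{k, j}_{-r}`. -/
def nSt (k j r : ℕ) : ℚ :=
  (1 / (j.factorial : ℚ)) * ∑ i ∈ range (j + 1),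
    (-1 : ℚ) ^ (j - i) * (j.choose i : ℚ) * ((i : ℚ) - r) ^ k

/-- Generalized (falling-factorial) binomial coefficient `C(x, m)`. -/
def gch (x : ℚ) (m : ℕ) : ℚ := (∏ i ∈ range m, (x - i)) / (m.factorial : ℚ)

lemma st_eq_zero {n j : ℕ} (h : n < j) : st n j = 0 := by
  induction n generalizing j with
  | zero => cases j with
    | zero => omega
    | succ t => rfl
  | succ n ih =>
    cases j with
    | zero => omega
    | succ t =>
      show (t + 1) * st n (t + 1) + st n t = 0
      rw [ih (by omega), ih (by omega)]
      simp

lemma key (n j : ℕ) :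
    ∑ m ∈ range (j + 1), (-1 : ℚ) ^ (j - m) * (j.choose m : ℚ) * (m : ℚ) ^ n
      = (j.factorial : ℚ) * (st n j : ℚ) := by
  induction n generalizing j with
  | zero =>
    cases j with
    | zero => simp [st]
    | succ t =>
      have hst : st 0 (t + 1) = 0 := rfl
      rw [hst]
      calc ∑ m ∈ range (t + 1 + 1), (-1 : ℚ) ^ (t + 1 - m) * ((t+1).choose m : ℚ) * (m : ℚ) ^ 0
          = ∑ m ∈ range (t + 2), (1:ℚ) ^ m * (-1:ℚ) ^ (t + 1 - m) * ((t+1).choose m : ℚ) := by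
            apply sum_congr rfl; intro m _; ring
        _ = ((1 : ℚ) + (-1)) ^ (t + 1) := (add_pow 1 (-1) (t + 1)).symm
        _ = 0 := by norm_num
        _ = (↑(t+1).factorial : ℚ) * ((0:ℕ) : ℚ) := by simp
  | succ n ih =>
    cases j with
    | zero => simp [st]
    | succ t =>
      set B : ℚ := ∑ m ∈ range (t + 1), (-1 : ℚ) ^ (t - m) * (t.choose m : ℚ) * ((m : ℚ) + 1) ^ n with hBdef
      have hB : ∑ m ∈ range (t + 1 + 1), (-1 : ℚ) ^ (t + 1 - m) * ((t+1).choose m : ℚ) * (m : ℚ) ^ (n+1)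
          = ((t : ℚ) + 1) * B := by
        rw [Finset.sum_range_succ' (fun m => (-1 : ℚ) ^ (t + 1 - m) * ((t+1).choose m : ℚ) * (m : ℚ) ^ (n+1)) (t+1)]
        have h0 : ((0:ℕ) : ℚ) ^ (n+1) = 0 := by simp
        rw [hBdef, mul_sum]
        rw [show ((-1 : ℚ) ^ (t + 1 - 0) * ((t+1).choose 0 : ℚ) * ((0:ℕ) : ℚ) ^ (n+1)) = 0 by rw [h0]; ring]
        rw [add_zero]
        apply sum_congr rfl
        intro m hm
        have hc : ((t:ℚ)+1) * (t.choose m : ℚ) = ((t+1).choose (m+1) : ℚ) * ((m:ℚ)+1) := by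
          exact_mod_cast congrArg (fun x : ℕ => (x : ℚ)) (Nat.add_one_mul_choose_eq t m)
        rw [Nat.succ_sub_succ]
        push_cast
        linear_combination (-(-1:ℚ)^(t-m) * ((m:ℚ)+1)^n) * hc
      -- S2 manipulations
      set S2 : ℚ := ∑ m ∈ range (t + 2), (-1 : ℚ) ^ (t + 1 - m) * (t.choose m : ℚ) * (m : ℚ) ^ n with hS2def
      have h1 : S2 = (∑ m ∈ range (t+1), (-1:ℚ)^(t-m) * (t.choose (m+1) : ℚ) * ((m:ℚ)+1)^n)
          + (-1:ℚ)^(t+1) * ((0:ℕ):ℚ)^n := by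
        rw [hS2def, Finset.sum_range_succ' (fun m => (-1 : ℚ) ^ (t + 1 - m) * (t.choose m : ℚ) * (m : ℚ) ^ n) (t+1)]
        congr 1
        · apply sum_congr rfl
          intro m hm
          rw [Nat.succ_sub_succ]
          push_cast
          ring
        · simp
      have h2 : S2 = -∑ m ∈ range (t+1), (-1:ℚ)^(t-m) * (t.choose m : ℚ) * (m:ℚ)^n := by
        rw [hS2def, Finset.sum_range_succ]
        rw [show (t.choose (t+1) : ℚ) = 0 by simp [Nat.choose_eq_zero_of_lt]]
        rw [mul_zero, zero_mul, add_zero, ← Finset.sum_neg_distrib]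
        apply sum_congr rfl
        intro m hm
        rw [mem_range] at hm
        rw [Nat.succ_sub (by omega : m ≤ t), pow_succ]
        ring
      -- A(t+1) n = B - A t n
      have hA : ∑ m ∈ range (t + 1 + 1), (-1 : ℚ) ^ (t + 1 - m) * ((t+1).choose m : ℚ) * (m : ℚ) ^ n
          = B + S2 := by
        rw [Finset.sum_range_succ' (fun m => (-1 : ℚ) ^ (t + 1 - m) * ((t+1).choose m : ℚ) * (m : ℚ) ^ n) (t+1)]
        rw [h1, hBdef]
        rw [show ∑ m ∈ range (t+1), (fun m => (-1 : ℚ) ^ (t + 1 - m) * ((t+1).choose m : ℚ) * (m : ℚ) ^ n) (m+1)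
            = ∑ m ∈ range (t+1), ((-1:ℚ)^(t-m) * (t.choose m : ℚ) * ((m:ℚ)+1)^n
              + (-1:ℚ)^(t-m) * (t.choose (m+1) : ℚ) * ((m:ℚ)+1)^n) from ?_]
        · rw [Finset.sum_add_distrib]
          simp only [Nat.choose_zero_right, Nat.cast_one, Nat.cast_zero]
          push_cast; ring
        · apply sum_congr rfl
          intro m hm
          dsimp only
          rw [Nat.succ_sub_succ, Nat.choose_succ_succ]
          push_cast
          ring
      -- assemble
      have hst : st (n+1) (t+1) = (t + 1) * st n (t + 1) + st n t := rfl
      rw [hB, hst]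
      have e1 := ih (t+1)
      have e2 := ih t
      rw [h2] at hA
      have hBval : B = ((t+1).factorial : ℚ) * (st n (t+1) : ℚ) + (t.factorial : ℚ) * (st n t : ℚ) := by
        rw [← e1, ← e2]
        linarith [hA]
      rw [hBval]
      push_cast [Nat.factorial_succ]
      ring

lemma sub_pow' (x y : ℚ) (n : ℕ) :
    (x - y) ^ n = ∑ i ∈ range (n + 1), (-1 : ℚ) ^ i * (n.choose i : ℚ) * x ^ (n - i) * y ^ i := by
  rw [_root_.sub_pow, ← Finset.sum_range_reflect]
  apply sum_congr rfl
  intro i hi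
  rw [mem_range] at hi
  have hle : i ≤ n := by omega
  have h1 : n + 1 - 1 - i = n - i := by omega
  rw [h1, Nat.choose_symm hle]
  have h2 : n - i + n = i + 2 * (n - i) := by omega
  have h3 : n - (n - i) = i := by omega
  rw [h2, h3, pow_add, pow_mul]
  norm_num
  ring

theorem stmt3 (k j r : ℕ) (h : j ≤ k) :
    (∑ i ∈ range (k - j + 1), (-1 : ℚ) ^ i * (k.choose i : ℚ) * (st (k - i) j : ℚ) * (r : ℚ) ^ i) =
      (1 / (j.factorial : ℚ)) * ∑ i ∈ range (j + 1),
        (-1 : ℚ) ^ (j - i) * (j.choose i : ℚ) * ((i : ℚ) - r) ^ k := by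
  have hfac : (j.factorial : ℚ) ≠ 0 := by exact_mod_cast j.factorial_ne_zero
  have main : (j.factorial : ℚ) *
      (∑ i ∈ range (k - j + 1), (-1 : ℚ) ^ i * (k.choose i : ℚ) * (st (k - i) j : ℚ) * (r : ℚ) ^ i)
      = ∑ m ∈ range (j + 1), (-1 : ℚ) ^ (j - m) * (j.choose m : ℚ) * ((m : ℚ) - r) ^ k := by
    calc (j.factorial : ℚ) *
        (∑ i ∈ range (k - j + 1), (-1 : ℚ) ^ i * (k.choose i : ℚ) * (st (k - i) j : ℚ) * (r : ℚ) ^ i)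
        = ∑ i ∈ range (k - j + 1),
            (-1 : ℚ) ^ i * (k.choose i : ℚ) * (r : ℚ) ^ i * ((j.factorial : ℚ) * (st (k - i) j : ℚ)) := by
          rw [mul_sum]; apply sum_congr rfl; intros; ring
      _ = ∑ i ∈ range (k + 1),
            (-1 : ℚ) ^ i * (k.choose i : ℚ) * (r : ℚ) ^ i * ((j.factorial : ℚ) * (st (k - i) j : ℚ)) := by
          apply Finset.sum_subset (Finset.range_subset_range.mpr (by omega))
          intro i hi hni
          rw [mem_range] at hi hni
          have hlt : k - i < j := by omega
          simp [st_eq_zero hlt]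
      _ = ∑ i ∈ range (k + 1), ∑ m ∈ range (j + 1),
            ((-1 : ℚ) ^ i * (k.choose i : ℚ) * (r : ℚ) ^ i) *
              ((-1 : ℚ) ^ (j - m) * (j.choose m : ℚ) * (m : ℚ) ^ (k - i)) := by
          apply sum_congr rfl
          intro i _
          rw [← key (k - i) j, Finset.mul_sum]
      _ = ∑ m ∈ range (j + 1), ∑ i ∈ range (k + 1),
            ((-1 : ℚ) ^ i * (k.choose i : ℚ) * (r : ℚ) ^ i) *
              ((-1 : ℚ) ^ (j - m) * (j.choose m : ℚ) * (m : ℚ) ^ (k - i)) := Finset.sum_comm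
      _ = ∑ m ∈ range (j + 1), (-1 : ℚ) ^ (j - m) * (j.choose m : ℚ) * ((m : ℚ) - r) ^ k := by
          apply sum_congr rfl
          intro m _
          rw [sub_pow', Finset.mul_sum]
          apply sum_congr rfl
          intro i _
          ring
  rw [← main, one_div, inv_mul_cancel_left₀ hfac]
end

section
/- For any non-negative integers k and r, S_k(r-1) = Σ_{j=0}^{k} (-1)^j · j! · C(r+j-1, j+1) · {k,j}_r when r ≥ 1, where {k,j}_r = (1/j!) Σ_{i=0}^{j} (-1)^{j-i} C(j,i) (i+r)^k. -/
open Finset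

/-- forward difference functional -/
def dd (f : ℕ → ℚ) (j : ℕ) : ℚ :=
  ∑ i ∈ range (j + 1), (-1 : ℚ) ^ (j - i) * (j.choose i : ℚ) * f i

def ee (f : ℕ → ℚ) (j : ℕ) : ℚ :=
  ∑ i ∈ range (j + 1), (-1 : ℚ) ^ i * (j.choose i : ℚ) * f i

lemma dd_eq_ee (f : ℕ → ℚ) (j : ℕ) : dd f j = (-1 : ℚ) ^ j * ee f j := by
  rw [ee, dd, mul_sum]
  refine sum_congr rfl fun i hi => ?_
  have hij : i ≤ j := Nat.lt_succ_iff.mp (mem_range.mp hi)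
  have h1 : (-1 : ℚ) ^ (j - i) * (-1 : ℚ) ^ i = (-1 : ℚ) ^ j := by
    rw [← pow_add, Nat.sub_add_cancel hij]
  have h2 : (-1 : ℚ) ^ (j - i) = (-1 : ℚ) ^ j * (-1 : ℚ) ^ i := by
    have hsq : (-1 : ℚ) ^ i * (-1 : ℚ) ^ i = 1 := by
      rw [← pow_add]; exact Even.neg_one_pow ⟨i, rfl⟩
    rw [← h1, mul_assoc, hsq, mul_one]
  rw [h2]; ring

lemma ee_succ (f : ℕ → ℚ) (j : ℕ) :
    ee f (j + 1) = - ee (fun i => f (i + 1) - f i) j := by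
  have h1 : ee f (j + 1) =
      ∑ t ∈ range (j + 1), (-1 : ℚ) ^ (t+1) * ((j+1).choose (t+1) : ℚ) * f (t+1)
        + (-1 : ℚ) ^ 0 * ((j+1).choose 0 : ℚ) * f 0 := by
    rw [ee, sum_range_succ' (fun i => (-1 : ℚ) ^ i * ((j+1).choose i : ℚ) * f i) (j+1)]
  have h2 : ∑ i ∈ range (j + 1 + 1), (-1 : ℚ) ^ i * (j.choose i : ℚ) * f i
      = ∑ t ∈ range (j + 1), (-1 : ℚ) ^ (t+1) * (j.choose (t+1) : ℚ) * f (t+1)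
        + (-1 : ℚ) ^ 0 * (j.choose 0 : ℚ) * f 0 := by
    rw [sum_range_succ' (fun i => (-1 : ℚ) ^ i * (j.choose i : ℚ) * f i) (j+1)]
  have h3 : ∑ i ∈ range (j + 1 + 1), (-1 : ℚ) ^ i * (j.choose i : ℚ) * f i = ee f j := by
    rw [ee, sum_range_succ]
    simp [Nat.choose_eq_zero_of_lt (Nat.lt_succ_self j)]
  rw [h1]
  have h4 : ∀ t, ((j+1).choose (t+1) : ℚ) = (j.choose t : ℚ) + (j.choose (t+1) : ℚ) := by
    intro t; rw [Nat.choose_succ_succ]; push_cast; ring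
  have h5 : ∑ t ∈ range (j + 1), (-1 : ℚ) ^ (t+1) * ((j+1).choose (t+1) : ℚ) * f (t+1)
      = ∑ t ∈ range (j + 1), (-1 : ℚ) ^ (t+1) * (j.choose t : ℚ) * f (t+1)
        + ∑ t ∈ range (j + 1), (-1 : ℚ) ^ (t+1) * (j.choose (t+1) : ℚ) * f (t+1) := by
    rw [← sum_add_distrib]
    refine sum_congr rfl fun t _ => ?_
    rw [h4]; ring
  rw [h5]
  have h6 : ∑ t ∈ range (j + 1), (-1 : ℚ) ^ (t+1) * (j.choose (t+1) : ℚ) * f (t+1)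
      + (-1 : ℚ) ^ 0 * ((j+1).choose 0 : ℚ) * f 0 = ee f j := by
    rw [← h3, h2]; simp
  have h7 : ee (fun i => f (i + 1) - f i) j
      = ∑ t ∈ range (j + 1), (-1 : ℚ) ^ t * (j.choose t : ℚ) * (f (t+1) - f t) := by
    rw [ee]
  rw [add_assoc, h6, h7, ee, ← sum_neg_distrib, ← sum_add_distrib]
  refine sum_congr rfl fun t _ => ?_
  ring

lemma dd_succ (f : ℕ → ℚ) (j : ℕ) :
    dd f (j + 1) = dd (fun i => f (i + 1) - f i) j := by
  rw [dd_eq_ee, dd_eq_ee, ee_succ]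
  ring


lemma ee_vanish (j : ℕ) : ∀ k, k < j → ∀ c : ℚ,
    ee (fun i => ((i : ℚ) + c) ^ k) j = 0 := by
  induction j with
  | zero => intro k hk; omega
  | succ m ih =>
    intro k hk c
    rw [ee_succ]
    have hfun : (fun i => (((i + 1 : ℕ) : ℚ) + c) ^ k - ((i : ℚ) + c) ^ k)
        = fun i : ℕ => ∑ s ∈ range k, (k.choose s : ℚ) * ((i : ℚ) + c) ^ s := by
      funext i
      have hb : ((i : ℚ) + c + 1) ^ k
          = (∑ s ∈ range k, ((i : ℚ) + c) ^ s * (k.choose s : ℚ)) + ((i : ℚ) + c) ^ k := by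
        have h := add_pow ((i : ℚ) + c) 1 k
        rw [sum_range_succ] at h
        simpa using h
      push_cast
      rw [show (i : ℚ) + 1 + c = (i : ℚ) + c + 1 by ring, hb]
      rw [add_sub_cancel_right]
      exact sum_congr rfl fun s _ => mul_comm _ _
    rw [hfun]
    have hlin : ee (fun i => ∑ s ∈ range k, (k.choose s : ℚ) * ((i : ℚ) + c) ^ s) m
        = ∑ s ∈ range k, (k.choose s : ℚ) * ee (fun i => ((i : ℚ) + c) ^ s) m := by
      simp only [ee, mul_sum]
      rw [sum_comm]
      refine sum_congr rfl fun s _ => ?_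
      refine sum_congr rfl fun i _ => ?_
      ring
    rw [hlin]
    have hz : ∀ s ∈ range k, (k.choose s : ℚ) * ee (fun i => ((i : ℚ) + c) ^ s) m = 0 := by
      intro s hs
      rw [ih s (by have := mem_range.mp hs; omega) c, mul_zero]
    rw [sum_congr rfl hz, sum_const_zero, neg_zero]

lemma dd_vanish (j k : ℕ) (hk : k < j) (c : ℚ) :
    dd (fun i => ((i : ℚ) + c) ^ k) j = 0 := by
  rw [dd_eq_ee, ee_vanish j k hk c, mul_zero]

lemma dd_inv : ∀ (n : ℕ) (f : ℕ → ℚ),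
    ∑ j ∈ range (n + 1), (n.choose j : ℚ) * dd f j = f n := by
  intro n
  induction n with
  | zero => intro f; simp [dd]
  | succ n ih =>
    intro f
    rw [sum_range_succ' (fun j => ((n+1).choose j : ℚ) * dd f j) (n+1)]
    have h4 : ∀ t, ((n+1).choose (t+1) : ℚ) = (n.choose t : ℚ) + (n.choose (t+1) : ℚ) := by
      intro t; rw [Nat.choose_succ_succ]; push_cast; ring
    have h5 : ∑ t ∈ range (n + 1), ((n+1).choose (t+1) : ℚ) * dd f (t+1)
        = ∑ t ∈ range (n + 1), (n.choose t : ℚ) * dd (fun i => f (i+1) - f i) t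
          + ∑ t ∈ range (n + 1), (n.choose (t+1) : ℚ) * dd f (t+1) := by
      rw [← sum_add_distrib]
      refine sum_congr rfl fun t _ => ?_
      rw [h4, ← dd_succ]; ring
    have h6 : ∑ t ∈ range (n + 1), (n.choose (t+1) : ℚ) * dd f (t+1)
          + ((n+1).choose 0 : ℚ) * dd f 0
        = ∑ j ∈ range (n + 1), (n.choose j : ℚ) * dd f j := by
      rw [show ((n+1).choose 0 : ℚ) = (n.choose 0 : ℚ) by norm_num,
        ← sum_range_succ' (fun j => (n.choose j : ℚ) * dd f j) (n+1),
        sum_range_succ]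
      simp [Nat.choose_eq_zero_of_lt (Nat.lt_succ_self n)]
    rw [h5, add_assoc, h6, ih (fun i => f (i+1) - f i), ih f]
    ring

lemma newton_nat (k r : ℕ) (n : ℕ) :
    ∑ j ∈ range (k + 1), (n.choose j : ℚ) * dd (fun i => ((i : ℚ) + r) ^ k) j
      = ((n : ℚ) + r) ^ k := by
  set f : ℕ → ℚ := fun i => ((i : ℚ) + r) ^ k with hf
  have hM : ∀ m, k ≤ m → n ≤ m →
      ∑ j ∈ range (m + 1), (n.choose j : ℚ) * dd f j = ((n : ℚ) + r) ^ k := by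
    intro m hkm hnm
    have h1 : ∑ j ∈ range (m + 1), (n.choose j : ℚ) * dd f j
        = ∑ j ∈ range (n + 1), (n.choose j : ℚ) * dd f j := by
      symm
      refine sum_subset (by intro x hx; simp at hx ⊢; omega) ?_
      intro x hx hx'
      simp only [mem_range] at hx hx'
      have : n < x := by omega
      rw [Nat.choose_eq_zero_of_lt this]
      simp
    rw [h1, dd_inv n f]
  have h2 : ∑ j ∈ range (max k n + 1), (n.choose j : ℚ) * dd f j
      = ∑ j ∈ range (k + 1), (n.choose j : ℚ) * dd f j := by
    symm
    refine sum_subset (by intro x hx; simp at hx ⊢; omega) ?_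
    intro x hx hx'
    simp only [mem_range] at hx hx'
    have hkx : k < x := by omega
    rw [hf, dd_vanish x k hkx (r : ℚ)]
    simp
  rw [← h2, hM (max k n) (le_max_left _ _) (le_max_right _ _)]

lemma prod_cast_choose (n j : ℕ) :
    ∏ i ∈ range j, ((n : ℚ) - i) = (n.choose j : ℚ) * (j.factorial : ℚ) := by
  induction j with
  | zero => simp
  | succ j ih =>
    rw [prod_range_succ, ih]
    rcases lt_or_ge j n with h | h
    · have hcast : (n : ℚ) - j = ((n - j : ℕ) : ℚ) := by
        rw [Nat.cast_sub h.le]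
      rw [hcast]
      have hnat : n.choose j * j.factorial * (n - j)
          = n.choose (j + 1) * (j + 1).factorial := by
        rw [Nat.factorial_succ, show n.choose (j+1) * ((j+1) * j.factorial)
            = n.choose (j+1) * (j+1) * j.factorial by ring, Nat.choose_succ_right_eq]
        ring
      calc (n.choose j : ℚ) * (j.factorial : ℚ) * ((n - j : ℕ) : ℚ)
          = ((n.choose j * j.factorial * (n - j) : ℕ) : ℚ) := by push_cast; ring
        _ = (n.choose (j + 1) : ℚ) * ((j + 1).factorial : ℚ) := by
            rw [hnat]; push_cast; ring
    · rcases eq_or_lt_of_le h with h' | h'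
      · rw [h']
        simp [Nat.choose_eq_zero_of_lt (Nat.lt_succ_self j)]
      · rw [Nat.choose_eq_zero_of_lt h', Nat.choose_eq_zero_of_lt (by omega)]
        simp

lemma newton_all (k r : ℕ) (x : ℚ) :
    (x + (r : ℚ)) ^ k
      = ∑ j ∈ range (k + 1), dd (fun i => ((i : ℚ) + r) ^ k) j * gch x j := by
  set f : ℕ → ℚ := fun i => ((i : ℚ) + r) ^ k with hf
  set p : Polynomial ℚ := (Polynomial.X + Polynomial.C (r : ℚ)) ^ k with hp
  set q : Polynomial ℚ := ∑ j ∈ range (k + 1),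
      Polynomial.C (dd f j / (j.factorial : ℚ)) *
        ∏ i ∈ range j, (Polynomial.X - Polynomial.C (i : ℚ)) with hq
  have hqeval : ∀ y : ℚ, q.eval y
      = ∑ j ∈ range (k + 1), (dd f j / (j.factorial : ℚ)) * ∏ i ∈ range j, (y - (i : ℚ)) := by
    intro y
    rw [hq, Polynomial.eval_finset_sum]
    refine sum_congr rfl fun j _ => ?_
    rw [Polynomial.eval_mul, Polynomial.eval_C, Polynomial.eval_prod]
    simp
  have heq : p = q := by
    apply Polynomial.eq_of_infinite_eval_eq
    apply Set.infinite_of_injective_forall_mem (f := fun n : ℕ => (n : ℚ))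
      (Nat.cast_injective)
    intro n
    simp only [Set.mem_setOf_eq]
    rw [hqeval, hp]
    simp only [Polynomial.eval_pow, Polynomial.eval_add, Polynomial.eval_X, Polynomial.eval_C]
    rw [← newton_nat k r n]
    refine sum_congr rfl fun j _ => ?_
    rw [prod_cast_choose]
    have hfac : (j.factorial : ℚ) ≠ 0 := by positivity
    field_simp
    ring
  have := congrArg (Polynomial.eval x) heq
  rw [hqeval] at this
  rw [hp] at this
  simp only [Polynomial.eval_pow, Polynomial.eval_add, Polynomial.eval_X, Polynomial.eval_C] at this
  rw [this]
  refine sum_congr rfl fun j _ => ?_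
  rw [gch]
  ring

lemma gch_pascal (x : ℚ) (j : ℕ) :
    gch (x + 1) (j + 1) = gch x (j + 1) + gch x j := by
  have h1 : ∏ i ∈ range (j + 1), (x + 1 - i)
      = (∏ i ∈ range j, (x - i)) * (x + 1) := by
    rw [prod_range_succ' (fun i => x + 1 - (i : ℕ)) j]
    have hc : ∀ i ∈ range j, x + 1 - ((i + 1 : ℕ) : ℚ) = x - i := by
      intro i _; push_cast; ring
    rw [prod_congr rfl hc]
    norm_num
  have h2 : ∏ i ∈ range (j + 1), (x - i)
      = (∏ i ∈ range j, (x - i)) * (x - j) := prod_range_succ _ _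
  rw [gch, gch, gch, h1, h2, Nat.factorial_succ]
  have hj : (j.factorial : ℚ) ≠ 0 := by positivity
  field_simp
  push_cast; ring

lemma gch_zero (j : ℕ) : gch 0 (j + 1) = 0 := by
  rw [gch]
  rw [prod_eq_zero (mem_range.mpr (Nat.succ_pos j)) (by norm_num)]
  simp

lemma gch_neg (r j : ℕ) (hr : 1 ≤ r) :
    gch (1 - (r : ℚ)) (j + 1)
      = (-1 : ℚ) ^ (j + 1) * ((r + j - 1).choose (j + 1) : ℚ) := by
  have hstep : ∀ i ∈ range (j + 1), (1 - (r : ℚ)) - i = -(((r - 1 + i : ℕ) : ℚ)) := by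
    intro i _
    push_cast [Nat.cast_sub hr]
    ring
  have h1 : ∏ i ∈ range (j + 1), ((1 - (r : ℚ)) - i)
      = (-1 : ℚ) ^ (j + 1) * ((∏ i ∈ range (j + 1), (r - 1 + i : ℕ) : ℕ) : ℚ) := by
    rw [prod_congr rfl hstep]
    rw [show (fun i : ℕ => -(((r - 1 + i : ℕ) : ℚ))) = fun i : ℕ => (-1 : ℚ) * ((r - 1 + i : ℕ) : ℚ) from by funext i; ring]
    rw [prod_mul_distrib, prod_const, card_range]
    push_cast
    ring
  have h2 : ∏ i ∈ range (j + 1), (r - 1 + i) = (r - 1 + j).descFactorial (j + 1) := by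
    rw [Nat.descFactorial_eq_prod_range]
    rw [← prod_range_reflect (fun i => r - 1 + i) (j + 1)]
    refine prod_congr rfl fun i hi => ?_
    have : i ≤ j := by have := mem_range.mp hi; omega
    omega
  have h3 : (r - 1 + j).descFactorial (j + 1) = (j + 1).factorial * (r + j - 1).choose (j + 1) := by
    rw [Nat.descFactorial_eq_factorial_mul_choose]
    congr 2
    omega
  rw [gch, h1, h2, h3]
  have hfac : ((j + 1).factorial : ℚ) ≠ 0 := by positivity
  push_cast
  field_simp

lemma telescope (F g : ℚ → ℚ) (h : ∀ x, F (x + 1) - F x = g x) (a : ℚ) :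
    ∀ n : ℕ, F (a + n) = F a + ∑ t ∈ range n, g (a + t) := by
  intro n
  induction n with
  | zero => simp
  | succ n ih =>
    have : a + ((n + 1 : ℕ) : ℚ) = (a + n) + 1 := by push_cast; ring
    rw [this, sum_range_succ, ← add_assoc, ← ih, ← h (a + n)]
    ring

theorem stmt13 (k r : ℕ) (hr : 1 ≤ r) :
    S k (r - 1) = ∑ j ∈ range (k + 1),
      (-1 : ℚ) ^ j * (j.factorial : ℚ) * ((r + j - 1).choose (j + 1) : ℚ) * rSt k j r := by
  set f : ℕ → ℚ := fun i => ((i : ℚ) + r) ^ k with hf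
  set F : ℚ → ℚ := fun x => ∑ j ∈ range (k + 1), dd f j * gch x (j + 1) with hF
  have hdelta : ∀ x : ℚ, F (x + 1) - F x = (x + (r : ℚ)) ^ k := by
    intro x
    rw [hF]
    simp only
    rw [← sum_sub_distrib]
    rw [newton_all k r x]
    refine sum_congr rfl fun j _ => ?_
    rw [gch_pascal]
    ring
  have htel := telescope F (fun x => (x + (r : ℚ)) ^ k) hdelta (1 - (r : ℚ)) (r - 1)
  have hcast : ((r - 1 : ℕ) : ℚ) = (r : ℚ) - 1 := by
    push_cast [Nat.cast_sub hr]; ring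
  rw [hcast, show (1 - (r : ℚ)) + ((r : ℚ) - 1) = 0 by ring] at htel
  have hF0 : F 0 = 0 := by
    rw [hF]
    simp only
    rw [sum_congr rfl fun j _ => by rw [gch_zero j, mul_zero]]
    exact sum_const_zero
  have hsum : ∑ t ∈ range (r - 1), ((1 - (r : ℚ)) + t + (r : ℚ)) ^ k = S k (r - 1) := by
    rw [S]
    refine sum_congr rfl fun t _ => ?_
    ring_nf
  rw [hF0, hsum] at htel
  have hFneg : F (1 - (r : ℚ)) = ∑ j ∈ range (k + 1),
      dd f j * ((-1 : ℚ) ^ (j + 1) * ((r + j - 1).choose (j + 1) : ℚ)) := by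
    rw [hF]
    exact sum_congr rfl fun j _ => by rw [gch_neg r j hr]
  have hS : S k (r - 1) = - F (1 - (r : ℚ)) := by linarith
  rw [hS, hFneg, ← sum_neg_distrib]
  refine sum_congr rfl fun j _ => ?_
  have hfac : (j.factorial : ℚ) ≠ 0 := by positivity
  simp only [rSt, hf, dd]
  field_simp
  ring
end
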